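/- arXiv:1804.04042 — 2 statements merged into one kernel-verified Lean document; each statement's English description precedes it below -/
import Mathlib

section
/- Let Φ and Ψ be quantum Latin squares of dimension n. Then Φ and Ψ are orthogonal if and only if they are GRMZ-orthogonal, i.e. if and only if all three of the following equations hold: (C) ∑_{i,j=0}^{n−1} |Φ_ij⟩⟨Φ_ij| ⊗ |Ψ_ij⟩⟨Ψ_ij| = I on ℂ^n ⊗ ℂ^n; (B) ∑_{i,j,p=0}^{n−1} ⟨Φ_ij|Φ_pj⟩ · |Ψ_ij⟩⟨Ψ_pj| ⊗ |i⟩⟨p| = I on ℂ^n ⊗ ℂ^n; (A) ∑_{i,j,p=0}^{n−1} ⟨Ψ_ij|Ψ_pj⟩ · |Φ_ij⟩⟨Φ_pj| ⊗ |i⟩⟨p| = I on ℂ^n ⊗ ℂ^n. -/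
open scoped ComplexConjugate Kronecker

noncomputable section

/-- A quantum Latin square of dimension `n`: an `n × n` array of vectors of `ℂ^n`
such that every row and every column is an orthonormal basis of `ℂ^n`. -/
def IsQLS (n : ℕ) (Φ : Fin n → Fin n → EuclideanSpace ℂ (Fin n)) : Prop :=
  (∀ i, Orthonormal ℂ (fun j => Φ i j)) ∧
  (∀ i, Submodule.span ℂ (Set.range fun j => Φ i j) = ⊤) ∧
  (∀ j, Orthonormal ℂ (fun i => Φ i j)) ∧
  (∀ j, Submodule.span ℂ (Set.range fun i => Φ i j) = ⊤)

/-- The tensor (Kronecker) product of two vectors of `ℂ^n`, as a vector of `ℂ^n ⊗ ℂ^n`. -/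
def tensorVec {n : ℕ} (u v : EuclideanSpace ℂ (Fin n)) :
    EuclideanSpace ℂ (Fin n × Fin n) :=
  WithLp.toLp 2 fun p => u p.1 * v p.2

/-- Two quantum Latin squares are orthogonal when the family `|Φ_ij⟩ ⊗ |Ψ_ij⟩` is an
orthonormal basis of `ℂ^n ⊗ ℂ^n`. -/
def QLSOrthogonal {n : ℕ} (Φ Ψ : Fin n → Fin n → EuclideanSpace ℂ (Fin n)) : Prop :=
  Orthonormal ℂ (fun p : Fin n × Fin n => tensorVec (Φ p.1 p.2) (Ψ p.1 p.2)) ∧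
  Submodule.span ℂ
    (Set.range fun p : Fin n × Fin n => tensorVec (Φ p.1 p.2) (Ψ p.1 p.2)) = ⊤

/-- The outer product `|u⟩⟨v|` as a matrix. -/
def outerMat {ι : Type*} (u v : ι → ℂ) : Matrix ι ι ℂ :=
  Matrix.of fun x y => u x * (starRingEnd ℂ) (v y)

/-!
Let `U` be the matrix whose columns are the vectors `|Φ_ij⟩ ⊗ |Ψ_ij⟩`. Equation (C) says
`U Uᴴ = 1` and orthonormality of the columns says `Uᴴ U = 1`; for a square matrix these are
equivalent, and an orthonormal family of `n²` vectors in `ℂ^n ⊗ ℂ^n` spans it. Equations (B) and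
(A) hold for every pair of QLS: orthonormality of the columns of one square collapses the sum to
`∑_i (∑_j |Ψ_ij⟩⟨Ψ_ij|) ⊗ |i⟩⟨i|`, and each row of the other square resolves the identity.
-/

open Matrix

theorem Matrix.sum_kronecker {α l m n p R : Type*} [Fintype α] [NonUnitalNonAssocSemiring R]
    (A : α → Matrix l m R) (B : Matrix n p R) :
    (∑ a, A a) ⊗ₖ B = ∑ a, A a ⊗ₖ B := by
  ext ⟨a, b⟩ ⟨c, d⟩
  simp [Matrix.sum_apply, Finset.sum_mul]

theorem Matrix.kronecker_sum {α l m n p R : Type*} [Fintype α] [NonUnitalNonAssocSemiring R]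
    (A : Matrix l m R) (B : α → Matrix n p R) :
    A ⊗ₖ (∑ a, B a) = ∑ a, A ⊗ₖ B a := by
  ext ⟨a, b⟩ ⟨c, d⟩
  simp [Matrix.sum_apply, Finset.mul_sum]

theorem outerMat_kronecker_outerMat {n : ℕ} (u v w z : EuclideanSpace ℂ (Fin n)) :
    outerMat u v ⊗ₖ outerMat w z = outerMat (tensorVec u w) (tensorVec v z) := by
  ext ⟨a, b⟩ ⟨c, d⟩
  simp only [kroneckerMap_apply, outerMat, of_apply, tensorVec, map_mul]
  ring

theorem sum_outerMat_self_eq_mul_conjTranspose {ι κ : Type*} [Fintype κ]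
    (v : κ → EuclideanSpace ℂ ι) :
    ∑ j, outerMat (v j) (v j) = (of fun x j => v j x) * (of fun x j => v j x)ᴴ := by
  ext x y
  simp [outerMat, mul_apply, Matrix.sum_apply]

theorem sum_outerMat_self_eq_one_iff_orthonormal {ι κ : Type*} [Fintype ι] [DecidableEq ι]
    [Fintype κ] [DecidableEq κ] (v : κ → EuclideanSpace ℂ ι)
    (h : Fintype.card κ = Fintype.card ι) :
    ∑ j, outerMat (v j) (v j) = 1 ↔ Orthonormal ℂ v := by
  rw [← gram_eq_one_iff_orthonormal, gram_eq_conjTranspose_mul (EuclideanSpace.basisFun ι ℂ) v,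
    sum_outerMat_self_eq_mul_conjTranspose, mul_eq_one_comm_of_card_eq ι κ ℂ h.symm]
  rfl

theorem sum_inner_smul_outerMat_kronecker_single_eq_one {E ι κ m : Type*}
    [NormedAddCommGroup E] [InnerProductSpace ℂ E] [Fintype ι] [DecidableEq ι] [Fintype κ]
    [Fintype m] [DecidableEq m]
    (Φ : ι → κ → E) (Ψ : ι → κ → EuclideanSpace ℂ m)
    (hΦ : ∀ j, Orthonormal ℂ fun i => Φ i j) (hΨ : ∀ i, ∑ j, outerMat (Ψ i j) (Ψ i j) = 1) :
    ∑ i, ∑ j, ∑ p, inner ℂ (Φ i j) (Φ p j) • (outerMat (Ψ i j) (Ψ p j) ⊗ₖ single i p (1 : ℂ)) =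
      1 := by
  have hinner : ∀ i j p, inner ℂ (Φ i j) (Φ p j) = if i = p then (1 : ℂ) else 0 :=
    fun i j p => orthonormal_iff_ite.mp (hΦ j) i p
  calc _ = ∑ i, (∑ j, outerMat (Ψ i j) (Ψ i j)) ⊗ₖ single i i (1 : ℂ) := by
        simp only [hinner, ite_smul, one_smul, zero_smul, Finset.sum_ite_eq, Finset.mem_univ,
          if_true, Matrix.sum_kronecker]
    _ = 1 ⊗ₖ ∑ i, single i i (1 : ℂ) := by simp only [hΨ, Matrix.kronecker_sum]
    _ = 1 := by rw [sum_single_one, one_kronecker_one]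

theorem qlsOrthogonal_iff_orthonormal {n : ℕ} (Φ Ψ : Fin n → Fin n → EuclideanSpace ℂ (Fin n)) :
    QLSOrthogonal Φ Ψ ↔
      Orthonormal ℂ fun p : Fin n × Fin n => tensorVec (Φ p.1 p.2) (Ψ p.1 p.2) :=
  ⟨And.left, fun h => ⟨h, h.linearIndependent.span_eq_top_of_card_eq_finrank' (by simp)⟩⟩

theorem sum_outerMat_kronecker_eq_one_iff_qlsOrthogonal {n : ℕ}
    (Φ Ψ : Fin n → Fin n → EuclideanSpace ℂ (Fin n)) :
    ∑ i, ∑ j, outerMat (Φ i j) (Φ i j) ⊗ₖ outerMat (Ψ i j) (Ψ i j) = 1 ↔ QLSOrthogonal Φ Ψ := by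
  simp only [outerMat_kronecker_outerMat, ← Fintype.sum_prod_type']
  rw [qlsOrthogonal_iff_orthonormal, sum_outerMat_self_eq_one_iff_orthonormal _ rfl]

/-- Two QLS `Φ, Ψ` are orthogonal iff they are GRMZ-orthogonal, i.e. iff the three
partial-trace equations (C), (B), (A) all hold. -/
theorem qls_orthogonal_iff_GRMZ (n : ℕ)
    (Φ Ψ : Fin n → Fin n → EuclideanSpace ℂ (Fin n))
    (hΦ : IsQLS n Φ) (hΨ : IsQLS n Ψ) :
    QLSOrthogonal Φ Ψ ↔
      ((∑ i : Fin n, ∑ j : Fin n,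
          (outerMat (Φ i j) (Φ i j)) ⊗ₖ (outerMat (Ψ i j) (Ψ i j)) =
        (1 : Matrix (Fin n × Fin n) (Fin n × Fin n) ℂ)) ∧
      (∑ i : Fin n, ∑ j : Fin n, ∑ p : Fin n,
          (inner ℂ (Φ i j) (Φ p j) : ℂ) •
            ((outerMat (Ψ i j) (Ψ p j)) ⊗ₖ Matrix.single i p (1 : ℂ)) =
        (1 : Matrix (Fin n × Fin n) (Fin n × Fin n) ℂ)) ∧
      (∑ i : Fin n, ∑ j : Fin n, ∑ p : Fin n,
          (inner ℂ (Ψ i j) (Ψ p j) : ℂ) •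
            ((outerMat (Φ i j) (Φ p j)) ⊗ₖ Matrix.single i p (1 : ℂ)) =
        (1 : Matrix (Fin n × Fin n) (Fin n × Fin n) ℂ))) := by
  have hB := sum_inner_smul_outerMat_kronecker_single_eq_one Φ Ψ hΦ.2.2.1
    fun i => (sum_outerMat_self_eq_one_iff_orthonormal _ rfl).mpr (hΨ.1 i)
  have hA := sum_inner_smul_outerMat_kronecker_single_eq_one Ψ Φ hΨ.2.2.1
    fun i => (sum_outerMat_self_eq_one_iff_orthonormal _ rfl).mpr (hΦ.1 i)
  rw [sum_outerMat_kronecker_eq_one_iff_qlsOrthogonal]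
  exact (and_iff_left ⟨hB, hA⟩).symm
end
end

section
/- Let n ≥ 2 and let (Φ^k)_{k∈{0,…,m−1}} be a family of mutually orthogonal quantum Latin squares of dimension n such that every square has the ordered computational basis as its first row, i.e. |Φ^k_{0i}⟩ = |i⟩ for all k and all i ∈ {0,…,n−1}. Then for all distinct k, l, the entries in position (1,0) are orthogonal: ⟨Φ^k_{10}|Φ^l_{10}⟩ = 0; moreover each |Φ^k_{10}⟩ is orthogonal to |0⟩, so the m+1 vectors |0⟩, |Φ^0_{10}⟩, …, |Φ^{m−1}_{10}⟩ are pairwise orthogonal. -/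
open scoped ComplexConjugate Kronecker

noncomputable section

/-!
If two orthogonal quantum Latin squares share the row `|0⟩, …, |n-1⟩`, then every other
entry `|Φ_ij⟩ ⊗ |Ψ_ij⟩` of the tensor basis is orthogonal to each `|c⟩ ⊗ |c⟩`, i.e. the
coordinates satisfy `Φ_ij(c) Ψ_ij(c) = 0` for all `c`. Disjoint supports force
`⟨Φ_ij|Ψ_ij⟩ = 0`. Orthogonality of `|Φ_10⟩` to `|0⟩ = |Φ_00⟩` is column orthonormality.
-/

lemma inner_tensorVec {n : ℕ} (u v u' v' : EuclideanSpace ℂ (Fin n)) :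
    (inner ℂ (tensorVec u v) (tensorVec u' v') : ℂ) = inner ℂ u u' * inner ℂ v v' := by
  simp only [PiLp.inner_apply, RCLike.inner_apply, tensorVec, map_mul]
  rw [Finset.sum_mul_sum, Fintype.sum_prod_type]
  exact Finset.sum_congr rfl fun p _ => Finset.sum_congr rfl fun q _ => by ring

lemma inner_tensorVec_single_single {n : ℕ} (c : Fin n) (u v : EuclideanSpace ℂ (Fin n)) :
    (inner ℂ (tensorVec (EuclideanSpace.single c 1) (EuclideanSpace.single c 1))
      (tensorVec u v) : ℂ) = u c * v c := by
  simp [inner_tensorVec, EuclideanSpace.inner_single_left]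

lemma EuclideanSpace.inner_eq_zero_of_mul_eq_zero {ι : Type*} [Fintype ι]
    {u v : EuclideanSpace ℂ ι} (h : ∀ c, u c * v c = 0) : (inner ℂ u v : ℂ) = 0 := by
  rw [PiLp.inner_apply]
  refine Finset.sum_eq_zero fun c _ => ?_
  rcases mul_eq_zero.mp (h c) with hu | hv <;> simp [RCLike.inner_apply, *]

lemma QLSOrthogonal.inner_eq_zero_of_row_eq_single {n : ℕ}
    {Φ Ψ : Fin n → Fin n → EuclideanSpace ℂ (Fin n)} (h : QLSOrthogonal Φ Ψ) {r : Fin n}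
    (hΦ : ∀ c, Φ r c = EuclideanSpace.single c 1) (hΨ : ∀ c, Ψ r c = EuclideanSpace.single c 1)
    {i : Fin n} (hi : i ≠ r) (j : Fin n) : (inner ℂ (Φ i j) (Ψ i j) : ℂ) = 0 := by
  refine EuclideanSpace.inner_eq_zero_of_mul_eq_zero fun c => ?_
  have hrc : (r, c) ≠ (i, j) := fun hrc => hi (congrArg Prod.fst hrc).symm
  have := h.1.2 hrc
  simp only [hΦ, hΨ] at this
  rwa [inner_tensorVec_single_single] at this

/-- If `(Φ^k)_{k < m}` are mutually orthogonal QLS of dimension `n ≥ 2` whose first row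
is the ordered computational basis, then the `(1,0)` entries of distinct squares are
orthogonal, and each `(1,0)` entry is orthogonal to `|0⟩`; hence the `m + 1` vectors
`|0⟩, |Φ^0_{10}⟩, …, |Φ^{m-1}_{10}⟩` are pairwise orthogonal. -/
theorem moqls_first_column_orthogonal (n m : ℕ) (hn : 2 ≤ n)
    (Φ : Fin m → Fin n → Fin n → EuclideanSpace ℂ (Fin n))
    (hQLS : ∀ k, IsQLS n (Φ k))
    (hMO : ∀ k l, k ≠ l → QLSOrthogonal (Φ k) (Φ l))
    (hrow : ∀ k (i : Fin n), Φ k ⟨0, by omega⟩ i = EuclideanSpace.single i 1) :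
    (∀ k l, k ≠ l →
      (inner ℂ (Φ k ⟨1, by omega⟩ ⟨0, by omega⟩) (Φ l ⟨1, by omega⟩ ⟨0, by omega⟩) : ℂ) = 0) ∧
    (∀ k,
      (inner ℂ (EuclideanSpace.single (⟨0, by omega⟩ : Fin n) (1 : ℂ))
        (Φ k ⟨1, by omega⟩ ⟨0, by omega⟩) : ℂ) = 0) := by
  have h10 : (⟨1, by omega⟩ : Fin n) ≠ ⟨0, by omega⟩ := by simp [Fin.ext_iff]
  refine ⟨fun k l hkl => (hMO k l hkl).inner_eq_zero_of_row_eq_single (hrow k) (hrow l) h10 _,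
    fun k => ?_⟩
  rw [← hrow k]
  exact ((hQLS k).2.2.1 _).2 h10.symm
end
end
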